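/- Let 𝒢 = (G, 𝓕₀, 𝓕₁) be a Muller game, let v be a vertex, and let σ be a winning strategy for Player i from v in 𝒢 such that every play ρ starting in v and consistent with σ satisfies maxscore_{𝓕_{1−i}}(ρ) ≤ 2. Then Player i has a winning strategy from v in the finite-time Muller game (G, 𝓕₀, 𝓕₁, 3) with threshold 3; in particular, for every play ρ starting in v consistent with σ, the shortest prefix w of ρ with maxscore_{2^V}(w) = 3 satisfies score_F(w) = 3 for a unique set F, and this F belongs to 𝓕ᵢ. -/

import Mathlib

/- Common definitions for finite-time Muller games, following
   McNaughton / Fearnley-Zimmermann. -/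

universe u

variable {V : Type u}

/-- The occurrence set of a finite word: the set of letters occurring in it. -/
def occ (x : List V) : Set V := {v | v ∈ x}

/-- `score F w` is the maximal `k` such that some suffix of `w` decomposes as
`x₁ ⋯ x_k` with every `xᵢ` non-empty and `occ xᵢ = F` (with `max ∅ = 0`). -/
noncomputable def score (F : Set V) (w : List V) : ℕ :=
  sSup {k | ∃ xs : List (List V), xs.length = k ∧
    (∀ x ∈ xs, x ≠ [] ∧ occ x = F) ∧ xs.flatten <:+ w}

/-- `maxscore 𝓕 w` is the maximum of `score F u` over `F ∈ 𝓕` and non-empty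
prefixes `u` of `w`. -/
noncomputable def maxscore (𝓕 : Set (Set V)) (w : List V) : ℕ :=
  sSup {n | ∃ F ∈ 𝓕, ∃ u : List V, u ≠ [] ∧ u <+: w ∧ n = score F u}

/-- `AccGood F w x` : `x` is a suffix of `w` with `occ x ⊆ F` such that removing
any suffix `y` of `x` from `w` does not change the score of `F`. -/
def AccGood (F : Set V) (w x : List V) : Prop :=
  x <:+ w ∧ occ x ⊆ F ∧
    ∀ y : List V, y <:+ x → score F (w.take (w.length - y.length)) = score F w

/-- The accumulator `acc F w` : the occurrence set of the longest suffix `x` of `w`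
with `occ x ⊆ F` such that the score of `F` did not change during `x`. -/
noncomputable def acc (F : Set V) (w : List V) : Set V :=
  occ (w.drop (sInf {i | AccGood F w (w.drop i)}))

/-- A non-empty word `w` is an `𝓕`-burden if `maxscore 𝓕 w ≤ 2` and for every
`F ∈ 𝓕` either `score F w = 0`, or `score F w = 1` and `acc F w = ∅`. -/
def Burden (𝓕 : Set (Set V)) (w : List V) : Prop :=
  w ≠ [] ∧ maxscore 𝓕 w ≤ 2 ∧
    ∀ F ∈ 𝓕, score F w = 0 ∨ (score F w = 1 ∧ acc F w = ∅)

/-- The maxscore of an infinite sequence: the supremum (in `ℕ∞`) of the scores of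
sets `F ∈ 𝓕` over all non-empty finite prefixes. -/
noncomputable def maxscoreInf (𝓕 : Set (Set V)) (ρ : ℕ → V) : ℕ∞ :=
  ⨆ F ∈ 𝓕, ⨆ n : ℕ, (score F ((List.range (n + 1)).map ρ) : ℕ∞)

/-- The set of elements occurring infinitely often in the sequence `ρ`. -/
def limitSet (ρ : ℕ → V) : Set V := {v | ∀ N : ℕ, ∃ n, N ≤ n ∧ ρ n = v}

/-- The indicator of a play: the union of all `F ∈ 𝓕` with positive score
together with all non-empty accumulators of members of `𝓕`. -/
noncomputable def ind (𝓕 : Set (Set V)) (w : List V) : Set V :=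
  (⋃ F ∈ {F ∈ 𝓕 | 0 < score F w}, F) ∪ ⋃ F ∈ {F ∈ 𝓕 | acc F w ≠ ∅}, acc F w

/-- An arena: a finite directed graph together with the set `V0` of vertices of
Player 0 (Player 1 owns the complement), where every vertex has a successor. -/
structure Arena (V : Type u) where
  V0 : Set V
  E : V → V → Prop
  exists_succ : ∀ v, ∃ u, E v u

/-- The positions of Player `i`. -/
def Arena.pos (G : Arena V) (i : Fin 2) : Set V :=
  if i = 0 then G.V0 else G.V0ᶜ

/-- A strategy maps a history (the play so far, excluding the current vertex)
and the current vertex to a successor vertex. -/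
abbrev Strategy (V : Type u) := List V → V → V

/-- A strategy is legal if it always moves along edges. -/
def Arena.Legal (G : Arena V) (σ : Strategy V) : Prop :=
  ∀ w v, G.E v (σ w v)

/-- An infinite play in `G` starting in `v`. -/
def Arena.IsPlay (G : Arena V) (v : V) (ρ : ℕ → V) : Prop :=
  ρ 0 = v ∧ ∀ n, G.E (ρ n) (ρ (n + 1))

/-- An infinite play is consistent with the strategy `σ` of Player `i`. -/
def Arena.ConsistentInf (G : Arena V) (i : Fin 2) (σ : Strategy V) (ρ : ℕ → V) : Prop :=
  ∀ n, ρ n ∈ G.pos i → ρ (n + 1) = σ ((List.range n).map ρ) (ρ n)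

/-- Player `i` (with winning condition `𝓕i`) wins the Muller game from `v`. -/
def Arena.MullerWinFrom (G : Arena V) (i : Fin 2) (𝓕i : Set (Set V)) (v : V) : Prop :=
  ∃ σ : Strategy V, G.Legal σ ∧
    ∀ ρ : ℕ → V, G.IsPlay v ρ → G.ConsistentInf i σ ρ → limitSet ρ ∈ 𝓕i

/-- The winning region of Player `i` in the Muller game. -/
def Arena.MullerWinRegion (G : Arena V) (i : Fin 2) (𝓕i : Set (Set V)) : Set V :=
  {v | G.MullerWinFrom i 𝓕i v}

/-- A finite play is consistent with the strategy `σ` of Player `i`. -/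
def Arena.ConsistentFin (G : Arena V) (i : Fin 2) (σ : Strategy V) (w : List V) : Prop :=
  ∀ (u : List V) (v x : V), u ++ [v, x] <+: w → v ∈ G.pos i → x = σ u v

/-- A play of the finite-time Muller game with threshold `k`: a finite path
whose maxscore (over all subsets) is exactly `k`, while the maxscore of
its proper prefixes is `< k`. -/
def FTPlay (G : Arena V) (k : ℕ) (w : List V) : Prop :=
  w.Chain' G.E ∧ maxscore (Set.univ : Set (Set V)) w = k ∧
    maxscore (Set.univ : Set (Set V)) w.dropLast < k

/-- Player `i` wins the finite-time Muller game with threshold `k` from `v`. -/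
def FTWinFrom (G : Arena V) (i : Fin 2) (𝓕i : Set (Set V)) (k : ℕ) (v : V) : Prop :=
  ∃ σ : Strategy V, G.Legal σ ∧
    ∀ w : List V, FTPlay G k w → w.head? = some v → G.ConsistentFin i σ w →
      ∃ F ∈ 𝓕i, score F w = k

/-- The winning region of Player `i` in the finite-time Muller game. -/
def FTWinRegion (G : Arena V) (i : Fin 2) (𝓕i : Set (Set V)) (k : ℕ) : Set V :=
  {v | FTWinFrom G i 𝓕i k v}

/-- A play of McNaughton's finite-time Muller game: a finite path such that some
set `F` reaches score `|F|! + 1`, while no set did so in a proper prefix. -/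
def McNPlay (G : Arena V) (w : List V) : Prop :=
  w.Chain' G.E ∧ (∃ F : Set V, score F w = F.ncard.factorial + 1) ∧
    ∀ u : List V, u <+: w → u ≠ w →
      ∀ F : Set V, score F u ≠ F.ncard.factorial + 1

/-- Player `i` wins McNaughton's finite-time Muller game from `v`. -/
def McNWinFrom (G : Arena V) (i : Fin 2) (𝓕i : Set (Set V)) (v : V) : Prop :=
  ∃ σ : Strategy V, G.Legal σ ∧
    ∀ w : List V, McNPlay G w → w.head? = some v → G.ConsistentFin i σ w →
      ∃ F ∈ 𝓕i, score F w = F.ncard.factorial + 1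

/-- The winning region of Player `i` in McNaughton's finite-time Muller game. -/
def McNWinRegion (G : Arena V) (i : Fin 2) (𝓕i : Set (Set V)) : Set V :=
  {v | McNWinFrom G i 𝓕i v}

open Classical in
/-- The list `ρ₀ ⋯ ρₙ` of the first `n+1` vertices of the unique play that starts
in `v` and is consistent with the strategy `σ` of Player `i` and the strategy `τ`
of the other player. -/
noncomputable def playList (G : Arena V) (i : Fin 2) (σ τ : Strategy V) (v : V) :
    ℕ → List V
  | 0 => [v]
  | n + 1 =>
      let w := playList G i σ τ v n
      let u := w.getLastD v
      w ++ [if u ∈ G.pos i then σ w.dropLast u else τ w.dropLast u]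

/-- `playOf G i σ τ v` : the unique play starting in `v` that is consistent with
the strategy `σ` of Player `i` and the strategy `τ` of the other player. -/
noncomputable def playOf (G : Arena V) (i : Fin 2) (σ τ : Strategy V) (v : V)
    (n : ℕ) : V :=
  (playList G i σ τ v n).getLastD v


/-!
Player `i` keeps playing `σ`. Any finite `σ`-consistent play prolongs, by letting `σ` choose
all further moves, to an infinite `σ`-consistent play, in which no set of `𝓕_{1-i}` ever reaches
score `3`; since `𝓕₀ ∪ 𝓕₁ = 2^V`, the set that ends the finite-time game lies in `𝓕ᵢ`.
That set is unique: if `F` and `G` reach score `k ≥ 2` at the same moment and the last `G`-block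
is at least as long as the last `F`-block, then either the last `G`-block lies inside the
`F`-blocks, forcing `F = G`, or it contains all of them, and cutting off the last `F`-block
leaves `k` `G`-blocks in a proper prefix.
-/

section Score

variable {F : Set V} {w : List V}

lemma occ_append (a b : List V) : occ (a ++ b) = occ a ∪ occ b := by
  ext x
  simp [occ]

lemma occ_flatten_eq {xs : List (List V)} (hne : xs ≠ []) (h : ∀ x ∈ xs, occ x = F) :
    occ xs.flatten = F := by
  ext a
  simp only [occ, Set.mem_ofPred_eq, List.mem_flatten]
  constructor
  · rintro ⟨x, hx, hax⟩
    exact h x hx ▸ hax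
  · intro ha
    obtain ⟨x, hx⟩ := List.exists_mem_of_ne_nil xs hne
    rw [← h x hx] at ha
    exact ⟨x, hx, ha⟩

lemma length_le_length_flatten {xs : List (List V)} (h : ∀ x ∈ xs, x ≠ []) :
    xs.length ≤ xs.flatten.length := by
  induction xs with
  | nil => simp
  | cons x xs ih =>
    have hx := List.length_pos_iff.mpr (h x List.mem_cons_self)
    have := ih fun y hy => h y (List.mem_cons_of_mem x hy)
    simp only [List.flatten_cons, List.length_append, List.length_cons]
    omega

lemma length_mem_upperBounds_score_set (F : Set V) (w : List V) :
    w.length ∈ upperBounds {k | ∃ xs : List (List V), xs.length = k ∧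
      (∀ x ∈ xs, x ≠ [] ∧ occ x = F) ∧ xs.flatten <:+ w} := by
  rintro _ ⟨xs, rfl, hxs, hw⟩
  exact (length_le_length_flatten fun x hx => (hxs x hx).1).trans hw.length_le

lemma le_score {xs : List (List V)} (hxs : ∀ x ∈ xs, x ≠ [] ∧ occ x = F)
    (hw : xs.flatten <:+ w) : xs.length ≤ score F w :=
  le_csSup ⟨_, length_mem_upperBounds_score_set F w⟩ ⟨xs, rfl, hxs, hw⟩

lemma score_le_length (F : Set V) (w : List V) : score F w ≤ w.length :=
  csSup_le' (length_mem_upperBounds_score_set F w)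

lemma exists_blocks_of_le_score {k : ℕ} (h : k ≤ score F w) :
    ∃ xs : List (List V), xs.length = k ∧ (∀ x ∈ xs, x ≠ [] ∧ occ x = F) ∧
      xs.flatten <:+ w := by
  obtain ⟨xs, hlen, hxs, hw⟩ : score F w ∈ {k | ∃ xs : List (List V), xs.length = k ∧
      (∀ x ∈ xs, x ≠ [] ∧ occ x = F) ∧ xs.flatten <:+ w} :=
    Nat.sSup_mem ⟨0, [], rfl, by simp, by simp⟩ ⟨_, length_mem_upperBounds_score_set F w⟩
  refine ⟨xs.drop (xs.length - k), by simp only [List.length_drop]; omega,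
    fun x hx => hxs x (List.mem_of_mem_drop hx), ?_⟩
  exact (List.drop_suffix _ xs).flatten.trans hw

end Score

section Maxscore

variable {𝓕 : Set (Set V)} {F : Set V} {u w : List V}

lemma length_mem_upperBounds_maxscore_set (𝓕 : Set (Set V)) (w : List V) :
    w.length ∈ upperBounds {n | ∃ F ∈ 𝓕, ∃ u : List V, u ≠ [] ∧ u <+: w ∧ n = score F u} := by
  rintro _ ⟨F, -, u, -, hu, rfl⟩
  exact (score_le_length F u).trans hu.length_le

lemma maxscore_le_length (𝓕 : Set (Set V)) (w : List V) : maxscore 𝓕 w ≤ w.length :=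
  csSup_le' (length_mem_upperBounds_maxscore_set 𝓕 w)

lemma score_le_maxscore (hF : F ∈ 𝓕) (hne : u ≠ []) (hu : u <+: w) :
    score F u ≤ maxscore 𝓕 w :=
  le_csSup ⟨_, length_mem_upperBounds_maxscore_set 𝓕 w⟩ ⟨F, hF, u, hne, hu, rfl⟩

lemma maxscore_mono (h : u <+: w) : maxscore 𝓕 u ≤ maxscore 𝓕 w :=
  csSup_le' fun _ ⟨_, hF, _, hne, hx, he⟩ => he ▸ score_le_maxscore hF hne (hx.trans h)

lemma exists_score_eq_maxscore (h : maxscore 𝓕 w ≠ 0) :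
    ∃ F ∈ 𝓕, ∃ u : List V, u ≠ [] ∧ u <+: w ∧ maxscore 𝓕 w = score F u := by
  refine Nat.sSup_mem ?_ ⟨_, length_mem_upperBounds_maxscore_set 𝓕 w⟩
  refine Set.nonempty_iff_ne_empty.mpr fun he => h ?_
  rw [maxscore, he, csSup_empty]
  rfl

end Maxscore

section Threshold

variable {𝓕 : Set (Set V)} {F G : Set V} {w : List V} {k : ℕ}

lemma exists_score_eq_of_maxscore_eq (h : maxscore 𝓕 w = k)
    (hd : maxscore 𝓕 w.dropLast < k) : ∃ F ∈ 𝓕, score F w = k := by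
  obtain ⟨F, hF, u, hne, hu, heq⟩ := exists_score_eq_maxscore (𝓕 := 𝓕) (w := w) (by omega)
  refine ⟨F, hF, ?_⟩
  rcases eq_or_ne u w with rfl | huw
  · omega
  have hlen : u.length ≤ w.dropLast.length := by
    have := hu.length_le
    have := mt hu.eq_of_length huw
    rw [List.length_dropLast]
    omega
  have := score_le_maxscore hF hne
    (List.prefix_of_prefix_length_le hu (List.dropLast_prefix w) hlen)
  omega

lemma eq_of_blocks_of_length_le {xs ys : List (List V)} {c d : List V} (hG : G ∈ 𝓕)
    (hd : maxscore 𝓕 w.dropLast ≤ ys.length) (hxs : xs ≠ [])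
    (hX : ∀ x ∈ xs ++ [c], x ≠ [] ∧ occ x = F) (hY : ∀ y ∈ ys ++ [d], y ≠ [] ∧ occ y = G)
    (hXw : (xs ++ [c]).flatten <:+ w) (hYw : (ys ++ [d]).flatten <:+ w)
    (hcd : c.length ≤ d.length) : F = G := by
  rw [List.flatten_concat] at hXw hYw
  obtain ⟨hc, hocc_c⟩ := hX c (by simp)
  have hocc_d := (hY d (by simp)).2
  have hocc_xs : occ xs.flatten = F := occ_flatten_eq hxs fun x hx => (hX x (by simp [hx])).2
  have hdw : d <:+ w := (List.suffix_append _ _).trans hYw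
  have hFG : F ⊆ G := by
    rw [← hocc_c, ← hocc_d]
    exact fun a ha => (List.suffix_of_suffix_length_le ((List.suffix_append _ _).trans hXw)
      hdw hcd).subset ha
  refine hFG.antisymm ?_
  rcases le_or_gt d.length (xs.flatten ++ c).length with hlen | hlen
  · have hocc_X : occ (xs.flatten ++ c) = F := by
      rw [occ_append, hocc_xs, hocc_c, Set.union_self]
    rw [← hocc_d, ← hocc_X]
    exact fun a ha => (List.suffix_of_suffix_length_le hdw hXw hlen).subset ha
  exfalso
  obtain ⟨z, rfl⟩ := List.suffix_of_suffix_length_le hXw hdw hlen.le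
  have hz : z ≠ [] := by rintro rfl; simp at hlen
  obtain ⟨p, hp⟩ := hYw
  set u := p ++ ys.flatten ++ (z ++ xs.flatten)
  have hw : w = u ++ c := by rw [← hp]; simp [u]
  have hu : u <+: w.dropLast := by
    rw [hw, List.dropLast_append_of_ne_nil hc]
    exact List.prefix_append _ _
  have hune : u ≠ [] := by simp [u, hz]
  have hblocks : ∀ y ∈ ys ++ [z ++ xs.flatten], y ≠ [] ∧ occ y = G := by
    intro y hy
    rcases List.mem_append.mp hy with hy | hy
    · exact hY y (List.mem_append_left _ hy)
    · rw [List.mem_singleton.mp hy, ← hocc_d, occ_append, occ_append, occ_append, hocc_xs,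
        hocc_c, Set.union_self]
      exact ⟨by simp [hz], rfl⟩
  have hscore :=
    le_score (w := u) hblocks (by rw [List.flatten_concat]; exact ⟨p, by simp [u]⟩)
  have := score_le_maxscore hG hune hu
  simp only [List.length_append, List.length_singleton] at hscore
  omega

lemma eq_of_le_score_of_maxscore_dropLast_lt (hk : 2 ≤ k) (hF𝓕 : F ∈ 𝓕) (hG𝓕 : G ∈ 𝓕)
    (hd : maxscore 𝓕 w.dropLast < k) (hF : k ≤ score F w) (hG : k ≤ score G w) : F = G := by
  obtain ⟨xs', hxlen, hX, hXw⟩ := exists_blocks_of_le_score hF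
  obtain ⟨ys', hylen, hY, hYw⟩ := exists_blocks_of_le_score hG
  obtain ⟨xs, c, rfl⟩ :=
    (List.eq_nil_or_concat' xs').resolve_left (by rintro rfl; simp at hxlen; omega)
  obtain ⟨ys, d, rfl⟩ :=
    (List.eq_nil_or_concat' ys').resolve_left (by rintro rfl; simp at hylen; omega)
  simp only [List.length_append, List.length_singleton] at hxlen hylen
  have hxs : xs ≠ [] := by rintro rfl; simp at hxlen; omega
  have hys : ys ≠ [] := by rintro rfl; simp at hylen; omega
  rcases le_total c.length d.length with hcd | hdc
  · exact eq_of_blocks_of_length_le hG𝓕 (by omega) hxs hX hY hXw hYw hcd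
  · exact (eq_of_blocks_of_length_le hF𝓕 (by omega) hys hY hX hYw hXw hdc).symm

end Threshold

section Extension

variable (σ : Strategy V) (v : V) (w : List V)

def extendList : ℕ → List V
  | 0 => w
  | n + 1 =>
      let l := extendList n
      l ++ [σ l.dropLast (l.getLastD v)]

def extendPlay (n : ℕ) : V :=
  (extendList σ v w n).getD n v

variable {σ v w}

lemma length_extendList (n : ℕ) : (extendList σ v w n).length = w.length + n := by
  induction n with
  | zero => rfl
  | succ n ih => simp [extendList, ih, add_assoc]

lemma extendList_prefix {m n : ℕ} (h : m ≤ n) : extendList σ v w m <+: extendList σ v w n := by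
  induction n, h using Nat.le_induction with
  | base => exact List.prefix_refl _
  | succ n _ ih => exact ih.trans (List.prefix_append _ _)

lemma extendPlay_eq_getElem (hw : w ≠ []) {j m : ℕ} (hj : j < (extendList σ v w m).length) :
    extendPlay σ v w j = (extendList σ v w m)[j] := by
  have hj' : j < (extendList σ v w j).length := by
    rw [length_extendList]
    have := List.length_pos_iff.mpr hw
    omega
  rw [extendPlay, List.getD_eq_getElem _ _ hj']
  rcases le_total j m with h | h
  · exact (extendList_prefix h).getElem hj'
  · exact ((extendList_prefix h).getElem hj).symm

lemma map_range_extendPlay (hw : w ≠ []) (k : ℕ) :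
    (List.range (w.length + k)).map (extendPlay σ v w) = extendList σ v w k :=
  List.ext_getElem (by simp [length_extendList]) fun j _ hj => by
    simpa using extendPlay_eq_getElem hw hj

lemma map_range_extendPlay_of_le (hw : w ≠ []) {n : ℕ} (h : n ≤ w.length) :
    (List.range n).map (extendPlay σ v w) = w.take n := by
  have hw' : (List.range w.length).map (extendPlay σ v w) = w := map_range_extendPlay hw 0
  conv_rhs => rw [← hw']
  rw [← List.map_take, List.take_range, min_eq_left h]

lemma extendPlay_succ (hw : w ≠ []) {n : ℕ} (h : w.length ≤ n + 1) :
    extendPlay σ v w (n + 1) =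
      σ ((List.range n).map (extendPlay σ v w)) (extendPlay σ v w n) := by
  obtain ⟨k, hk⟩ : ∃ k, n + 1 = w.length + k := ⟨n + 1 - w.length, by omega⟩
  have h1 := map_range_extendPlay (σ := σ) (v := v) hw k
  have h2 := map_range_extendPlay (σ := σ) (v := v) hw (k + 1)
  rw [← add_assoc, ← hk] at h2
  rw [← hk] at h1
  rw [extendList, ← h1] at h2
  simpa [List.range_succ] using h2

lemma map_range_extendPlay_append_prefix (hw : w ≠ []) {n : ℕ} (h : n + 2 ≤ w.length) :
    (List.range n).map (extendPlay σ v w) ++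
      [extendPlay σ v w n, extendPlay σ v w (n + 1)] <+: w := by
  have := map_range_extendPlay_of_le (σ := σ) (v := v) hw h
  simp only [List.range_succ, List.map_append, List.append_assoc,
    List.singleton_append] at this
  exact this ▸ List.take_prefix _ _

variable {G : Arena V} {i : Fin 2}

lemma isPlay_extendPlay (hσ : G.Legal σ) (hchain : w.IsChain G.E) (hv : w.head? = some v) :
    G.IsPlay v (extendPlay σ v w) := by
  have hw : w ≠ [] := by rintro rfl; simp at hv
  refine ⟨?_, fun n => ?_⟩
  · have := map_range_extendPlay_of_le (σ := σ) (v := v) hw (List.length_pos_iff.mpr hw)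
    obtain ⟨a, w, rfl⟩ := List.exists_cons_of_ne_nil hw
    simp_all
  rcases lt_or_ge (n + 1) w.length with h | h
  · exact List.isChain_pair.mp <|
      (List.IsChain.prefix hchain (map_range_extendPlay_append_prefix hw h)).right_of_append
  · exact extendPlay_succ hw h ▸ hσ _ _

lemma consistentInf_extendPlay (hw : w ≠ []) (hcons : G.ConsistentFin i σ w) :
    G.ConsistentInf i σ (extendPlay σ v w) := by
  intro n hn
  rcases lt_or_ge (n + 1) w.length with h | h
  · exact hcons _ _ _ (map_range_extendPlay_append_prefix hw h) hn
  · exact extendPlay_succ hw h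

end Extension

lemma score_le_maxscoreInf {𝓕 : Set (Set V)} {F : Set V} (hF : F ∈ 𝓕) (ρ : ℕ → V) (n : ℕ) :
    (score F ((List.range n).map ρ) : ℕ∞) ≤ maxscoreInf 𝓕 ρ := by
  cases n with
  | zero => simp [Nat.le_zero.mp (score_le_length F [])]
  | succ n => exact le_iSup₂_of_le F hF (le_iSup_of_le n le_rfl)

lemma mem_of_maxscoreInf_le {𝓕 𝓕' : Set (Set V)} {F : Set V} {ρ : ℕ → V} {n : ℕ} {k : ℕ∞}
    (hcover : 𝓕 ∪ 𝓕' = Set.univ) (hρ : maxscoreInf 𝓕' ρ ≤ k)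
    (hF : k < score F ((List.range n).map ρ)) : F ∈ 𝓕 :=
  (hcover ▸ Set.mem_univ F : F ∈ 𝓕 ∪ 𝓕').resolve_right fun hF' =>
    (hF.trans_le ((score_le_maxscoreInf hF' ρ n).trans hρ)).false

theorem stmt_15_general {V : Type u} (G : Arena V)
    (F0 F1 : Set (Set V)) (hpart : F0 ∪ F1 = Set.univ)
    (i : Fin 2) (v : V) (σ : Strategy V) (hσ : G.Legal σ)
    (hbound : ∀ ρ : ℕ → V, G.IsPlay v ρ → G.ConsistentInf i σ ρ →
      maxscoreInf (if i = 0 then F1 else F0) ρ ≤ 2) :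
    FTWinFrom G i (if i = 0 then F0 else F1) 3 v ∧
      ∀ ρ : ℕ → V, G.IsPlay v ρ → G.ConsistentInf i σ ρ →
        ∀ n : ℕ, maxscore (Set.univ : Set (Set V)) ((List.range n).map ρ) = 3 →
          (∀ m < n, maxscore (Set.univ : Set (Set V)) ((List.range m).map ρ) ≠ 3) →
          (∃! F : Set V, score F ((List.range n).map ρ) = 3) ∧
            ∀ F : Set V, score F ((List.range n).map ρ) = 3 →
              F ∈ (if i = 0 then F0 else F1) := by
  have hcover : (if i = 0 then F0 else F1) ∪ (if i = 0 then F1 else F0) = Set.univ := by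
    split_ifs <;> simp [hpart, Set.union_comm]
  refine ⟨⟨σ, hσ, fun w ⟨hchain, hw3, hdrop⟩ hv hcons => ?_⟩, fun ρ hρ hcons n hn hmin => ?_⟩
  · have hw : w ≠ [] := by rintro rfl; simp at hv
    obtain ⟨F, -, hF⟩ := exists_score_eq_of_maxscore_eq hw3 hdrop
    have hρw : (List.range w.length).map (extendPlay σ v w) = w := map_range_extendPlay hw 0
    refine ⟨F, mem_of_maxscoreInf_le hcover (hbound _ (isPlay_extendPlay hσ hchain hv)
      (consistentInf_extendPlay hw hcons)) (n := w.length) ?_, hF⟩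
    rw [hρw, hF]
    norm_num
  rcases n with _ | m
  · have := maxscore_le_length Set.univ ((List.range 0).map ρ)
    simp at this hn
    omega
  have hd : maxscore Set.univ ((List.range (m + 1)).map ρ).dropLast < 3 := by
    have hdrop : ((List.range (m + 1)).map ρ).dropLast = (List.range m).map ρ := by
      rw [List.range_succ, List.map_append, List.map_singleton, List.dropLast_concat]
    have hmono :=
      maxscore_mono (𝓕 := Set.univ) (List.dropLast_prefix ((List.range (m + 1)).map ρ))
    rw [hdrop] at hmono ⊢
    exact lt_of_le_of_ne (hn ▸ hmono) (hmin m m.lt_add_one)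
  obtain ⟨F, -, hF⟩ := exists_score_eq_of_maxscore_eq hn hd
  refine ⟨⟨F, hF, fun F' hF' => eq_of_le_score_of_maxscore_dropLast_lt (by norm_num)
    (Set.mem_univ F') (Set.mem_univ F) hd hF'.ge hF.ge⟩, fun F' hF' => ?_⟩
  exact mem_of_maxscoreInf_le hcover (hbound ρ hρ hcons) (by rw [hF']; norm_num)

/-- If `σ` is a winning strategy for Player `i` from `v` in
the Muller game `(G, 𝓕₀, 𝓕₁)` such that every consistent play `ρ` from `v`
satisfies `maxscore_{𝓕_{1-i}}(ρ) ≤ 2`, then Player `i` wins the finite-time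
Muller game `(G, 𝓕₀, 𝓕₁, 3)` from `v`; in particular, for every consistent play
`ρ` from `v`, the shortest prefix `w` of `ρ` with `maxscore_{2^V}(w) = 3`
satisfies `score F w = 3` for a unique set `F`, and this `F` belongs to `𝓕ᵢ`. -/
theorem stmt_15 {V : Type u} [Fintype V] (G : Arena V)
    (F0 F1 : Set (Set V)) (hpart : F0 ∪ F1 = Set.univ) (hdisj : Disjoint F0 F1)
    (i : Fin 2) (v : V) (σ : Strategy V) (hσ : G.Legal σ)
    (hwin : ∀ ρ : ℕ → V, G.IsPlay v ρ → G.ConsistentInf i σ ρ →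
      limitSet ρ ∈ (if i = 0 then F0 else F1))
    (hbound : ∀ ρ : ℕ → V, G.IsPlay v ρ → G.ConsistentInf i σ ρ →
      maxscoreInf (if i = 0 then F1 else F0) ρ ≤ 2) :
    FTWinFrom G i (if i = 0 then F0 else F1) 3 v ∧
      ∀ ρ : ℕ → V, G.IsPlay v ρ → G.ConsistentInf i σ ρ →
        ∀ n : ℕ, maxscore (Set.univ : Set (Set V)) ((List.range n).map ρ) = 3 →
          (∀ m < n, maxscore (Set.univ : Set (Set V)) ((List.range m).map ρ) ≠ 3) →
          (∃! F : Set V, score F ((List.range n).map ρ) = 3) ∧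
            ∀ F : Set V, score F ((List.range n).map ρ) = 3 →
              F ∈ (if i = 0 then F0 else F1) :=
  stmt_15_general G F0 F1 hpart i v σ hσ hbound
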